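/- arXiv:1308.2885 — 3 statements merged into one kernel-verified Lean document; each statement's English description precedes it below -/
import Mathlib

section
/- (Fact 1) Let n ≥ 1 and let p ∈ ℤⁿ have all coordinates nonnegative. There exists at least one linear monotone discrete path from the origin to p, i.e., a monotone discrete path q₀, …, q_k from 0 to p such that for every point q_i of the path, the closed axis-aligned unit cube centered at q_i intersects the straight line segment joining 0 to p. -/
/-- The natural embedding of a lattice point of `ℤⁿ` into Euclidean space `ℝⁿ`. -/
noncomputable def latticeToE (n : ℕ) (q : Fin n → ℤ) : EuclideanSpace ℝ (Fin n) :=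
  WithLp.toLp 2 (fun j => (q j : ℝ))

/-- The voxel of a lattice point `h ∈ ℤⁿ`: the closed axis-aligned unit hypercube
centered at `h`. -/
def voxel (n : ℕ) (h : Fin n → ℤ) : Set (EuclideanSpace ℝ (Fin n)) :=
  {x | ∀ j, |x j - (h j : ℝ)| ≤ 1 / 2}

/-!
Move along the segment `t ↦ t • p` and record which voxels it crosses. Keeping a parameter `t`
whose point `t • p` lies in the voxel of the current lattice point `q`, increase `t` until the
first coordinate `j` with `q j < p j` reaches the face `q j + 1/2` of the voxel; stepping `q` in
direction `j` keeps `t • p` in the voxel of the new point. Every step decreases `∑ j, (p j - q j)`,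
so the walk reaches `p`.
-/

open Finset

section

variable {ι : Type*}

/-- Coordinate form of "the voxel of `q` meets the segment `[0, p]`", for `q` in the box `[0, p]`. -/
def nearSegment (p : ι → ℤ) : Set (ι → ℤ) :=
  {q | 0 ≤ q ∧ q ≤ p ∧ ∃ t ∈ Set.Icc (0 : ℝ) 1, ∀ j, |t * p j - q j| ≤ 1 / 2}

variable [Fintype ι] [DecidableEq ι]

theorem exists_monotone_path_of_exists_step (S : Set (ι → ℤ)) (p : ι → ℤ)
    (hS : ∀ q ∈ S, q ≤ p) (hstep : ∀ q ∈ S, q ≠ p → ∃ j, q + Pi.single j 1 ∈ S)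
    {q₀ : ι → ℤ} (hq₀ : q₀ ∈ S) :
    ∃ (k : ℕ) (q : Fin (k + 1) → ι → ℤ), q 0 = q₀ ∧ q (Fin.last k) = p ∧
      (∀ i : Fin k, ∃ j, q i.succ = q i.castSucc + Pi.single j 1) ∧ ∀ i, q i ∈ S := by
  obtain ⟨m, hgap⟩ : ∃ m : ℕ, ∑ j, (p j - q₀ j) = m :=
    ⟨_, (Int.toNat_of_nonneg (sum_nonneg fun j _ => sub_nonneg.2 (hS q₀ hq₀ j))).symm⟩
  induction m generalizing q₀ with
  | zero =>
    have hq₀p : q₀ = p := funext fun j => by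
      have := (sum_eq_zero_iff_of_nonneg fun j _ => sub_nonneg.2 (hS q₀ hq₀ j)).1
        (by exact_mod_cast hgap) j (mem_univ j)
      omega
    subst hq₀p
    exact ⟨0, fun _ => q₀, rfl, rfl, fun i => i.elim0, fun _ => hq₀⟩
  | succ m ih =>
    have hne : q₀ ≠ p := by
      rintro rfl
      simp only [sub_self, sum_const_zero] at hgap
      omega
    obtain ⟨j, hq₁⟩ := hstep q₀ hq₀ hne
    have hgap₁ : ∑ i, (p i - (q₀ + Pi.single j 1 : ι → ℤ) i) = m := by
      simp only [Pi.add_apply, sub_add_eq_sub_sub, sum_sub_distrib, sum_pi_single', mem_univ,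
        if_true] at hgap ⊢
      push_cast at hgap
      linarith
    obtain ⟨k, q, hq0, hqk, hsteps, hmem⟩ := ih hq₁ hgap₁
    refine ⟨k + 1, Fin.cons q₀ q, rfl, by rwa [← Fin.succ_last, Fin.cons_succ], ?_, ?_⟩
    · refine Fin.cases ⟨j, by simp [hq0]⟩ fun i => ?_
      simpa only [← Fin.succ_castSucc, Fin.cons_succ] using hsteps i
    · exact Fin.cases hq₀ fun i => by simpa only [Fin.cons_succ] using hmem i

theorem exists_add_single_mem_nearSegment {p q : ι → ℤ} (hq : q ∈ nearSegment p) (hne : q ≠ p) :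
    ∃ j, q + Pi.single j 1 ∈ nearSegment p := by
  obtain ⟨hq0, hqp, t₀, ⟨ht₀, -⟩, hnear⟩ := hq
  obtain ⟨j, hj⟩ : ∃ j, q j < p j := by
    by_contra! h
    exact hne (le_antisymm hqp h)
  have hlt : (univ.filter fun j => q j < p j).Nonempty := ⟨j, by simpa using hj⟩
  -- The point `t • p` leaves the slab `|x j - q j| ≤ 1/2` through its upper face at time
  -- `(q j + 1/2) / p j`; `j₀` is the coordinate for which this happens first.
  obtain ⟨j₀, hj₀, hmin⟩ := exists_min_image _ (fun j => ((q j : ℝ) + 1 / 2) / p j) hlt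
  simp only [mem_filter, mem_univ, true_and] at hj₀ hmin
  set t₁ : ℝ := ((q j₀ : ℝ) + 1 / 2) / p j₀
  have hpos : ∀ j, q j < p j → (0 : ℝ) < p j := fun j hj => Int.cast_pos.2 ((hq0 j).trans_lt hj)
  have hpj₀ := hpos j₀ hj₀
  have ht₁j₀ : t₁ * p j₀ = q j₀ + 1 / 2 := div_mul_cancel₀ _ hpj₀.ne'
  have ht₀₁ : t₀ ≤ t₁ := (le_div_iff₀ hpj₀).2 (by linarith [(abs_le.1 (hnear j₀)).2])
  have ht₁ : t₁ ≤ 1 := (div_le_one hpj₀).2 <| by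
    have : (q j₀ : ℝ) + 1 ≤ p j₀ := by exact_mod_cast hj₀
    linarith
  have hp_nonneg : ∀ j, (0 : ℝ) ≤ p j := fun j => by exact_mod_cast (hq0 j).trans (hqp j)
  have hlower : ∀ j, (q j : ℝ) - 1 / 2 ≤ t₁ * p j := fun j => by
    linarith [(abs_le.1 (hnear j)).1, mul_le_mul_of_nonneg_right ht₀₁ (hp_nonneg j)]
  have hupper : ∀ j, t₁ * p j ≤ q j + 1 / 2 := fun j => by
    rcases (hqp j).lt_or_eq with hj | hj
    · exact (le_div_iff₀ (hpos j hj)).1 (hmin j hj)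
    · have : (q j : ℝ) = p j := by exact_mod_cast hj
      linarith [mul_le_mul_of_nonneg_right ht₁ (hp_nonneg j)]
  refine ⟨j₀, ?_, ?_, t₁, ⟨ht₀.trans ht₀₁, ht₁⟩, fun j => ?_⟩
  · exact le_add_of_le_of_nonneg hq0 (Pi.single_nonneg.2 zero_le_one)
  · intro j
    rcases eq_or_ne j j₀ with rfl | hj
    · simpa using hj₀
    · simpa [hj] using hqp j
  · rcases eq_or_ne j j₀ with rfl | hj
    · simp only [Pi.add_apply, Pi.single_eq_same, Int.cast_add, Int.cast_one, ht₁j₀]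
      norm_num
    · simp only [Pi.add_apply, Pi.single_eq_of_ne hj, add_zero]
      exact abs_le.2 ⟨by linarith [hlower j], by linarith [hupper j]⟩

end

theorem voxel_inter_segment_nonempty_of_mem_nearSegment {n : ℕ} {p q : Fin n → ℤ}
    (hq : q ∈ nearSegment p) :
    (voxel n q ∩ segment ℝ (0 : EuclideanSpace ℝ (Fin n)) (latticeToE n p)).Nonempty := by
  obtain ⟨-, -, t, ⟨ht₀, ht₁⟩, hnear⟩ := hq
  refine ⟨t • latticeToE n p, fun j => by simpa [latticeToE] using hnear j,
    1 - t, t, by linarith, ht₀, by ring, by simp⟩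

theorem exists_linear_monotone_path_general (n : ℕ)
    (p : Fin n → ℤ) (hp : ∀ j, 0 ≤ p j) :
    ∃ (k : ℕ) (q : Fin (k + 1) → (Fin n → ℤ)),
      q 0 = 0 ∧ q (Fin.last k) = p ∧
      (∀ i : Fin k, ∃ j : Fin n, q i.succ = q i.castSucc + Pi.single j 1) ∧
      ∀ i : Fin (k + 1),
        (voxel n (q i) ∩ segment ℝ (0 : EuclideanSpace ℝ (Fin n)) (latticeToE n p)).Nonempty := by
  have h₀ : (0 : Fin n → ℤ) ∈ nearSegment p :=
    ⟨le_rfl, hp, 0, ⟨le_rfl, zero_le_one⟩, fun j => by norm_num⟩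
  obtain ⟨k, q, hq0, hqk, hsteps, hmem⟩ := exists_monotone_path_of_exists_step (nearSegment p) p
    (fun _ hq => hq.2.1) (fun _ => exists_add_single_mem_nearSegment) h₀
  exact ⟨k, q, hq0, hqk, hsteps, fun i => voxel_inter_segment_nonempty_of_mem_nearSegment (hmem i)⟩

/-- (Fact 1) For every point `p ∈ ℤⁿ` with nonnegative coordinates there exists a
linear monotone discrete path from the origin to `p`: a monotone discrete path
each of whose points has its voxel intersecting the segment joining `0` to `p`. -/
theorem exists_linear_monotone_path (n : ℕ) (hn : 1 ≤ n)
    (p : Fin n → ℤ) (hp : ∀ j, 0 ≤ p j) :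
    ∃ (k : ℕ) (q : Fin (k + 1) → (Fin n → ℤ)),
      q 0 = 0 ∧ q (Fin.last k) = p ∧
      (∀ i : Fin k, ∃ j : Fin n, q i.succ = q i.castSucc + Pi.single j 1) ∧
      ∀ i : Fin (k + 1),
        (voxel n (q i) ∩ segment ℝ (0 : EuclideanSpace ℝ (Fin n)) (latticeToE n p)).Nonempty :=
  exists_linear_monotone_path_general n p hp
end

section
/- (Proposition 1, geometric content) Let n ≥ 1 and let L = p₀, p₁, …, p_m be a monotone discrete path in ℤⁿ with p₀ = 0, m ≥ 2, and p_m ≠ 0. Let ℓ be the straight line through p₀ and p_m, and set r = max_{0 ≤ i ≤ m} d(p_i, ℓ). Let r* = inf over all affine lines ℓ′ in ℝⁿ of max_{0 ≤ i ≤ m} d(p_i, ℓ′) (the radius of a minimum enclosing cylinder of the point set L). Then r* ≤ r ≤ 2 r*. -/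
/-- The affine line through `x` with direction `v` in `ℝⁿ`. -/
def affLine (n : ℕ) (x v : EuclideanSpace ℝ (Fin n)) : Set (EuclideanSpace ℝ (Fin n)) :=
  {y | ∃ t : ℝ, y = x + t • v}

open Metric RealInnerProductSpace

theorem sub_mul_le_mul_abs_sub {x y s t C : ℝ} (hxy : x * y ≤ 0) (hs : |s| ≤ C) (ht : |t| ≤ C) :
    x * s - y * t ≤ C * |x - y| := by
  have hsum : |x - y| = |x| + |y| := by
    rcases mul_nonpos_iff.mp hxy with ⟨hx, hy⟩ | ⟨hx, hy⟩
    · rw [abs_of_nonneg hx, abs_of_nonpos hy, abs_of_nonneg (by linarith)]; ring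
    · rw [abs_of_nonpos hx, abs_of_nonneg hy, abs_of_nonpos (by linarith)]; ring
  calc x * s - y * t ≤ |x| * |s| + |y| * |t| := by
        rw [← abs_mul, ← abs_mul]; linarith [le_abs_self (x * s), neg_abs_le (y * t)]
    _ ≤ |x| * C + |y| * C := by gcongr
    _ = C * |x - y| := by rw [hsum]; ring

/-- `C * h` is twice the area of a triangle with sides at most `C` whose vertices project to
`0, a, b` along a unit direction; splitting it at the vertex whose projection lies in the middle
bounds this area by `C` times the width `max |a| (max |b| |a - b|)`. -/
theorem le_max_abs_of_mul_eq_sub {a b c' q' C h : ℝ} (hC : 0 < C)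
    (hdet : C * h = a * q' - b * c') (hc : |c'| ≤ C) (hq : |q'| ≤ C) (hqc : |q' - c'| ≤ C) :
    h ≤ max |a| (max |b| |a - b|) := by
  refine le_of_mul_le_mul_left ?_ hC
  rw [hdet]
  rcases le_or_gt (a * b) 0 with hab | hab
  · calc a * q' - b * c' ≤ C * |a - b| := sub_mul_le_mul_abs_sub hab hq hc
      _ ≤ _ := by gcongr; exact (le_max_right _ _).trans (le_max_right _ _)
  rcases le_or_gt (a * (a - b)) 0 with haab | haab
  · calc a * q' - b * c' = a * (q' - c') - (a - b) * (-c') := by ring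
      _ ≤ C * |a - (a - b)| := sub_mul_le_mul_abs_sub haab hqc (by rwa [abs_neg])
      _ ≤ _ := by gcongr; rw [sub_sub_cancel]; exact (le_max_left _ _).trans (le_max_right _ _)
  · calc a * q' - b * c' = (a - b) * q' - (-b) * (q' - c') := by ring
      _ ≤ C * |a - b - -b| := sub_mul_le_mul_abs_sub (by nlinarith) hq hqc
      _ ≤ _ := by gcongr; rw [sub_neg_eq_add, sub_add_cancel]; exact le_max_left _ _

theorem le_max_abs_of_triangle {α β γ C h : ℝ} (hC : 0 < C) (hβγ : β ^ 2 + γ ^ 2 = 1)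
    (hq : (α * C) ^ 2 + h ^ 2 ≤ C ^ 2) (hqc : ((α - 1) * C) ^ 2 + h ^ 2 ≤ C ^ 2) :
    h ≤ max |β * C| (max |α * β * C + γ * h| |β * C - (α * β * C + γ * h)|) := by
  -- In an orthonormal frame the vertices are `0, (C, 0), (α C, h)` and the direction is `(β, γ)`;
  -- `c'` and `q'` are the coordinates of the vertices along `(-γ, β)`.
  refine le_max_abs_of_mul_eq_sub hC (c' := -γ * C) (q' := β * h - α * γ * C)
    (by linear_combination (-(C * h)) * hβγ) ?_ ?_ ?_ <;>
    refine abs_le_of_sq_le_sq ?_ hC.le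
  · nlinarith [sq_nonneg β, sq_nonneg C]
  · linear_combination hq + ((α * C) ^ 2 + h ^ 2) * hβγ + sq_nonneg (α * β * C + γ * h)
  · linear_combination hqc + (((α - 1) * C) ^ 2 + h ^ 2) * hβγ +
      sq_nonneg ((α - 1) * β * C + γ * h)

theorem exists_sq_add_sq_eq_one_and_mul_add_mul_eq_zero (b₁ b₂ : ℝ) :
    ∃ β γ : ℝ, β ^ 2 + γ ^ 2 = 1 ∧ β * b₁ + γ * b₂ = 0 := by
  rcases eq_or_ne (b₁ ^ 2 + b₂ ^ 2) 0 with hb | hb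
  · exact ⟨1, 0, by norm_num, by nlinarith⟩
  have hs : 0 < √(b₁ ^ 2 + b₂ ^ 2) := Real.sqrt_pos.2 (lt_of_le_of_ne (by positivity) hb.symm)
  refine ⟨b₂ / √(b₁ ^ 2 + b₂ ^ 2), -b₁ / √(b₁ ^ 2 + b₂ ^ 2), ?_, by field_simp; ring⟩
  rw [div_pow, div_pow, neg_sq, ← add_div, Real.sq_sqrt (by positivity), add_comm, div_self hb]

section InnerProductSpace

variable {F : Type*} [NormedAddCommGroup F] [InnerProductSpace ℝ F]

theorem exists_unit_orthogonal_in_plane (v : F) {c w : F} (hc : c ≠ 0) (hw : w ≠ 0)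
    (hcw : ⟪c, w⟫ = 0) :
    ∃ β γ : ℝ, β ^ 2 + γ ^ 2 = 1 ∧
      ∃ e : F, ‖e‖ = 1 ∧ ⟪v, e⟫ = 0 ∧ ⟪c, e⟫ = β * ‖c‖ ∧ ⟪w, e⟫ = γ * ‖w‖ := by
  obtain ⟨β, γ, hβγ, hv⟩ :=
    exists_sq_add_sq_eq_one_and_mul_add_mul_eq_zero (⟪v, c⟫ / ‖c‖) (⟪v, w⟫ / ‖w‖)
  have hc' : ‖c‖ ≠ 0 := norm_ne_zero_iff.2 hc
  have hw' : ‖w‖ ≠ 0 := norm_ne_zero_iff.2 hw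
  set e := (β / ‖c‖) • c + (γ / ‖w‖) • w
  have hce : ⟪c, e⟫ = β * ‖c‖ := by
    simp only [e, inner_add_right, real_inner_smul_right, real_inner_self_eq_norm_sq, hcw,
      mul_zero, add_zero]
    field_simp
  have hwe : ⟪w, e⟫ = γ * ‖w‖ := by
    simp only [e, inner_add_right, real_inner_smul_right, real_inner_self_eq_norm_sq,
      real_inner_comm c w, hcw, mul_zero, zero_add]
    field_simp
  have hee : ‖e‖ ^ 2 = 1 := by
    rw [← real_inner_self_eq_norm_sq]
    calc ⟪e, e⟫ = β / ‖c‖ * ⟪c, e⟫ + γ / ‖w‖ * ⟪w, e⟫ := by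
          simp only [e, inner_add_left, real_inner_smul_left]
      _ = 1 := by rw [hce, hwe]; field_simp; linear_combination hβγ
  refine ⟨β, γ, hβγ, e, ?_, ?_, hce, hwe⟩
  · exact (pow_eq_one_iff_of_nonneg (norm_nonneg e) two_ne_zero).1 hee
  · simp only [e, inner_add_right, real_inner_smul_right]
    linear_combination hv

theorem norm_smul_add_sq_of_inner_eq_zero {c w : F} (hcw : ⟪c, w⟫ = 0) (s : ℝ) :
    ‖s • c + w‖ ^ 2 = (s * ‖c‖) ^ 2 + ‖w‖ ^ 2 := by
  rw [norm_add_sq_real, real_inner_smul_left, hcw, norm_smul, Real.norm_eq_abs, mul_pow, sq_abs,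
    mul_pow]
  ring

end InnerProductSpace

section Euclidean

variable {n : ℕ}

theorem mem_affLine {x v y : EuclideanSpace ℝ (Fin n)} :
    y ∈ affLine n x v ↔ ∃ t : ℝ, y = x + t • v := Iff.rfl

theorem abs_inner_sub_le_infDist_affLine {x v e : EuclideanSpace ℝ (Fin n)} (he : ‖e‖ = 1)
    (hve : ⟪v, e⟫ = 0) (y : EuclideanSpace ℝ (Fin n)) :
    |⟪y - x, e⟫| ≤ infDist y (affLine n x v) := by
  refine (le_infDist ⟨x, mem_affLine.2 ⟨0, by rw [zero_smul, add_zero]⟩⟩).2 fun z hz => ?_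
  obtain ⟨t, rfl⟩ := mem_affLine.1 hz
  calc |⟪y - x, e⟫| = |⟪y - (x + t • v), e⟫| := by
        rw [sub_add_eq_sub_sub, inner_sub_left (y - x) (t • v) e, real_inner_smul_left, hve,
          mul_zero, sub_zero]
    _ ≤ ‖y - (x + t • v)‖ * ‖e‖ := abs_real_inner_le_norm _ _
    _ = dist y (x + t • v) := by rw [he, mul_one, dist_eq_norm]

theorem abs_inner_sub_le_infDist_add_infDist {x v e : EuclideanSpace ℝ (Fin n)} (he : ‖e‖ = 1)
    (hve : ⟪v, e⟫ = 0) (a b : EuclideanSpace ℝ (Fin n)) :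
    |⟪a - b, e⟫| ≤ infDist a (affLine n x v) + infDist b (affLine n x v) := by
  calc |⟪a - b, e⟫| = |⟪a - x, e⟫ - ⟪b - x, e⟫| := by
        rw [← inner_sub_left, sub_sub_sub_cancel_right]
    _ ≤ |⟪a - x, e⟫| + |⟪b - x, e⟫| := abs_sub _ _
    _ ≤ _ := add_le_add (abs_inner_sub_le_infDist_affLine he hve a)
        (abs_inner_sub_le_infDist_affLine he hve b)

theorem infDist_affLine_le_two_mul {c q x v : EuclideanSpace ℝ (Fin n)} {M : ℝ} (hc : c ≠ 0)
    (hq : ‖q‖ ≤ ‖c‖) (hqc : ‖q - c‖ ≤ ‖c‖) (h0M : infDist 0 (affLine n x v) ≤ M)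
    (hqM : infDist q (affLine n x v) ≤ M) (hcM : infDist c (affLine n x v) ≤ M) :
    infDist q (affLine n 0 c) ≤ 2 * M := by
  set α := ⟪q, c⟫ / ‖c‖ ^ 2
  set w := q - α • c
  have hcw : ⟪c, w⟫ = 0 := by
    rw [inner_sub_right, real_inner_smul_right, real_inner_self_eq_norm_sq, real_inner_comm,
      div_mul_cancel₀ _ (pow_ne_zero 2 (norm_ne_zero_iff.2 hc)), sub_self]
  have hqw : infDist q (affLine n 0 c) ≤ ‖w‖ := by
    rw [← dist_eq_norm]
    exact infDist_le_dist_of_mem (mem_affLine.2 ⟨α, (zero_add _).symm⟩)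
  rcases eq_or_ne w 0 with hw | hw
  · rw [hw, norm_zero] at hqw
    linarith [infDist_nonneg (x := (0 : EuclideanSpace ℝ (Fin n))) (s := affLine n x v)]
  obtain ⟨β, γ, hβγ, e, he, hve, hce, hwe⟩ := exists_unit_orthogonal_in_plane v hc hw hcw
  have hq_eq : α • c + w = q := add_sub_cancel _ _
  have hqc_eq : (α - 1) • c + w = q - c := by rw [← hq_eq, sub_smul, one_smul]; abel
  have hqe : ⟪q, e⟫ = α * β * ‖c‖ + γ * ‖w‖ := by
    rw [← hq_eq, inner_add_left, real_inner_smul_left, hce, hwe]; ring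
  have hq' : (α * ‖c‖) ^ 2 + ‖w‖ ^ 2 ≤ ‖c‖ ^ 2 := by
    rw [← norm_smul_add_sq_of_inner_eq_zero hcw, hq_eq]; gcongr
  have hqc' : ((α - 1) * ‖c‖) ^ 2 + ‖w‖ ^ 2 ≤ ‖c‖ ^ 2 := by
    rw [← norm_smul_add_sq_of_inner_eq_zero hcw, hqc_eq]; gcongr
  have hwidth := le_max_abs_of_triangle (norm_pos_iff.2 hc) hβγ hq' hqc'
  rw [← hce, ← hqe, ← inner_sub_left] at hwidth
  have hproj := abs_inner_sub_le_infDist_add_infDist (x := x) he hve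
  refine hqw.trans (hwidth.trans (max_le ?_ (max_le ?_ ?_)))
  · simpa only [sub_zero] using (hproj c 0).trans (by linarith)
  · simpa only [sub_zero] using (hproj q 0).trans (by linarith)
  · exact (hproj c q).trans (by linarith)

theorem iSup_infDist_affLine_le_two_mul {ι : Type*} [Finite ι]
    {P : ι → EuclideanSpace ℝ (Fin n)} {i₀ i₁ : ι} (h₀ : P i₀ = 0) (hc : P i₁ ≠ 0)
    (hlens : ∀ i, ‖P i‖ ≤ ‖P i₁‖ ∧ ‖P i - P i₁‖ ≤ ‖P i₁‖) (x v : EuclideanSpace ℝ (Fin n)) :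
    ⨆ i, infDist (P i) (affLine n 0 (P i₁)) ≤ 2 * ⨆ i, infDist (P i) (affLine n x v) := by
  have : Nonempty ι := ⟨i₀⟩
  have hbdd : BddAbove (Set.range fun i => infDist (P i) (affLine n x v)) :=
    (Set.finite_range _).bddAbove
  exact ciSup_le fun i => infDist_affLine_le_two_mul hc (hlens i).1 (hlens i).2
    (h₀ ▸ le_ciSup hbdd i₀) (le_ciSup hbdd i) (le_ciSup hbdd i₁)

end Euclidean

section Lattice

variable {n : ℕ}

theorem latticeToE_apply (q : Fin n → ℤ) (j : Fin n) : latticeToE n q j = q j := rfl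

theorem latticeToE_injective : Function.Injective (latticeToE n) := fun a b h =>
  funext fun j => by simpa only [latticeToE_apply, Int.cast_inj] using congrArg (· j) h

theorem latticeToE_zero : latticeToE n 0 = 0 := by
  ext j; simp [latticeToE_apply]

theorem latticeToE_sub (a b : Fin n → ℤ) :
    latticeToE n (a - b) = latticeToE n a - latticeToE n b := by
  ext j; simp [latticeToE_apply]

theorem norm_latticeToE_le_of_abs_le {a b : Fin n → ℤ} (h : ∀ j, |a j| ≤ |b j|) :
    ‖latticeToE n a‖ ≤ ‖latticeToE n b‖ := by
  simp only [EuclideanSpace.norm_eq, latticeToE_apply, Real.norm_eq_abs, sq_abs]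
  exact Real.sqrt_le_sqrt (Finset.sum_le_sum fun j _ => by exact_mod_cast sq_le_sq.2 (h j))

theorem norm_latticeToE_le_of_le {a b : Fin n → ℤ} (ha : 0 ≤ a) (hab : a ≤ b) :
    ‖latticeToE n a‖ ≤ ‖latticeToE n b‖ ∧
      ‖latticeToE n a - latticeToE n b‖ ≤ ‖latticeToE n b‖ := by
  rw [← latticeToE_sub]
  constructor <;> refine norm_latticeToE_le_of_abs_le fun j => abs_le_abs ?_ ?_ <;>
    linarith [show (0 : ℤ) ≤ a j from ha j, hab j, Pi.sub_apply a b j]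

end Lattice

theorem monotone_of_eq_add_single {ι : Type*} [DecidableEq ι] {m : ℕ} {p : Fin (m + 1) → ι → ℤ}
    (hstep : ∀ i : Fin m, ∃ j, p i.succ = p i.castSucc + Pi.single j 1) : Monotone p :=
  Fin.monotone_iff_le_succ.2 fun i => by
    obtain ⟨j, hj⟩ := hstep i
    exact hj ▸ le_add_of_nonneg_right (Pi.single_nonneg.2 zero_le_one)

theorem two_approx_min_enclosing_cylinder_general (n : ℕ)
    (m : ℕ)
    (p : Fin (m + 1) → (Fin n → ℤ)) (h0 : p 0 = 0)
    (hstep : ∀ i : Fin m, ∃ j : Fin n, p i.succ = p i.castSucc + Pi.single j 1)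
    (hne : p (Fin.last m) ≠ 0)
    (r : ℝ)
    (hr : r = ⨆ i : Fin (m + 1),
      Metric.infDist (latticeToE n (p i))
        (affLine n (0 : EuclideanSpace ℝ (Fin n)) (latticeToE n (p (Fin.last m)))))
    (rstar : ℝ)
    (hrstar : rstar = sInf {s : ℝ | ∃ x v : EuclideanSpace ℝ (Fin n), v ≠ 0 ∧
      s = ⨆ i : Fin (m + 1), Metric.infDist (latticeToE n (p i)) (affLine n x v)}) :
    rstar ≤ r ∧ r ≤ 2 * rstar := by
  have hp := monotone_of_eq_add_single hstep
  have hlens i := norm_latticeToE_le_of_le (h0 ▸ hp (Fin.zero_le i)) (hp (Fin.le_last i))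
  have hP₀ : latticeToE n (p 0) = 0 := by rw [h0, latticeToE_zero]
  have hc : latticeToE n (p (Fin.last m)) ≠ 0 := by
    rwa [Ne, ← latticeToE_zero, latticeToE_injective.eq_iff]
  set S := {s : ℝ | ∃ x v : EuclideanSpace ℝ (Fin n), v ≠ 0 ∧
      s = ⨆ i : Fin (m + 1), infDist (latticeToE n (p i)) (affLine n x v)}
  have hrS : r ∈ S := ⟨0, _, hc, hr⟩
  have hbdd : BddBelow S :=
    ⟨0, by rintro s ⟨x, v, -, rfl⟩; exact Real.iSup_nonneg fun _ => infDist_nonneg⟩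
  have hhalf : r / 2 ≤ rstar := hrstar ▸ le_csInf ⟨r, hrS⟩ (by
    rintro s ⟨x, v, -, rfl⟩
    linarith [hr ▸ iSup_infDist_affLine_le_two_mul (P := fun i => latticeToE n (p i))
      hP₀ hc hlens x v])
  exact ⟨hrstar ▸ csInf_le hbdd hrS, by linarith⟩

/-- (Proposition 1, geometric content) For a monotone discrete path
`L = p₀, …, p_m` in `ℤⁿ` with `p₀ = 0`, `m ≥ 2` and `p_m ≠ 0`, let `r` be the
maximum distance from the points of `L` to the line `ℓ` through `p₀` and `p_m`,
and let `r*` be the radius of a minimum enclosing cylinder of `L` (the infimum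
over all affine lines of the maximum distance from the points of `L` to the
line). Then `r* ≤ r ≤ 2 r*`. -/
theorem two_approx_min_enclosing_cylinder (n : ℕ) (hn : 1 ≤ n)
    (m : ℕ) (hm : 2 ≤ m)
    (p : Fin (m + 1) → (Fin n → ℤ)) (h0 : p 0 = 0)
    (hstep : ∀ i : Fin m, ∃ j : Fin n, p i.succ = p i.castSucc + Pi.single j 1)
    (hne : p (Fin.last m) ≠ 0)
    (r : ℝ)
    (hr : r = ⨆ i : Fin (m + 1),
      Metric.infDist (latticeToE n (p i))
        (affLine n (0 : EuclideanSpace ℝ (Fin n)) (latticeToE n (p (Fin.last m)))))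
    (rstar : ℝ)
    (hrstar : rstar = sInf {s : ℝ | ∃ x v : EuclideanSpace ℝ (Fin n), v ≠ 0 ∧
      s = ⨆ i : Fin (m + 1), Metric.infDist (latticeToE n (p i)) (affLine n x v)}) :
    rstar ≤ r ∧ r ≤ 2 * rstar :=
  two_approx_min_enclosing_cylinder_general n m p h0 hstep hne r hr rstar hrstar
end

section
/- (Key lower bound used in Proposition 1) Let n ≥ 1 and let p, q ∈ ℝⁿ satisfy 0 ≤ p ≤ q coordinatewise, with q ≠ 0. Let r = d(p, ℓ) be the Euclidean distance from p to the line ℓ through the origin and q. Then for every affine line ℓ′ in ℝⁿ, max{ d(0, ℓ′), d(q, ℓ′), d(p, ℓ′) } ≥ r/2. In other words, any enclosing cylinder of the three points 0, q, p has radius at least r/2. -/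
open Metric Set AffineMap

section Normed

variable {E : Type*} [NormedAddCommGroup E] [NormedSpace ℝ E]

lemma exists_mem_segment_dist_lt_of_wbtw {a b c A B C : E} {ρ : ℝ} (h : Wbtw ℝ a b c)
    (hA : dist A a < ρ) (hB : dist B b < ρ) (hC : dist C c < ρ) :
    ∃ y ∈ segment ℝ A C, dist B y < 2 * ρ := by
  obtain ⟨θ, hθ, rfl⟩ := h
  refine ⟨lineMap A C θ, lineMap_mem_segment ℝ A C hθ, ?_⟩
  have hshift : dist (lineMap a c θ) (lineMap A C θ) < ρ := by
    have : lineMap (a - A) (c - C) θ ∈ ball (0 : E) ρ :=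
      (convex_ball 0 ρ).lineMap_mem (by simpa [dist_comm, dist_eq_norm] using hA)
        (by simpa [dist_comm, dist_eq_norm] using hC) hθ
    rwa [mem_ball_zero_iff, ← vsub_eq_sub, ← vsub_eq_sub, ← lineMap_vsub_lineMap,
      vsub_eq_sub, ← dist_eq_norm] at this
  linarith [dist_triangle B (lineMap a c θ) (lineMap A C θ)]

theorem half_le_max_infDist_of_collinear {A B C : E} {h : ℝ} {s : Set E} (hs : Collinear ℝ s)
    (hne : s.Nonempty) (hA : ∀ y ∈ segment ℝ B C, h ≤ dist A y)
    (hB : ∀ y ∈ segment ℝ A C, h ≤ dist B y) (hC : ∀ y ∈ segment ℝ A B, h ≤ dist C y) :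
    h / 2 ≤ max (max (infDist A s) (infDist B s)) (infDist C s) := by
  by_contra! hlt
  simp only [max_lt_iff] at hlt
  obtain ⟨⟨hAs, hBs⟩, hCs⟩ := hlt
  obtain ⟨a, ha, hAa⟩ := (infDist_lt_iff hne).1 hAs
  obtain ⟨b, hb, hBb⟩ := (infDist_lt_iff hne).1 hBs
  obtain ⟨c, hc, hCc⟩ := (infDist_lt_iff hne).1 hCs
  have hcol : Collinear ℝ {a, b, c} := hs.subset (by simp [insert_subset_iff, ha, hb, hc])
  rcases hcol.wbtw_or_wbtw_or_wbtw with hw | hw | hw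
  · obtain ⟨y, hy, hBy⟩ := exists_mem_segment_dist_lt_of_wbtw hw hAa hBb hCc
    linarith [hB y hy]
  · obtain ⟨y, hy, hCy⟩ := exists_mem_segment_dist_lt_of_wbtw hw hBb hCc hAa
    linarith [hC y (segment_symm ℝ A B ▸ hy)]
  · obtain ⟨y, hy, hAy⟩ := exists_mem_segment_dist_lt_of_wbtw hw hCc hAa hBb
    linarith [hA y (segment_symm ℝ B C ▸ hy)]

end Normed

section InnerProduct

variable {E : Type*} [NormedAddCommGroup E] [InnerProductSpace ℝ E]

-- Lagrange's identity; at the minimising `μ` only the Gram determinant, symmetric in `u, w`, remains.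
lemma sq_norm_mul_sq_norm_sub_smul (u w : E) (μ : ℝ) :
    ‖w‖ ^ 2 * ‖u - μ • w‖ ^ 2 =
      ‖u‖ ^ 2 * ‖w‖ ^ 2 - inner ℝ u w ^ 2 + (μ * ‖w‖ ^ 2 - inner ℝ u w) ^ 2 := by
  rw [norm_sub_sq_real, real_inner_smul_right, norm_smul, Real.norm_eq_abs, mul_pow, sq_abs]
  ring

-- Twice the area of the triangle `0 p q` is `‖q‖ d(p, ℝq) = ‖p‖ d(q, ℝp)`.
lemma le_norm_sub_smul_of_norm_le {p q : E} {r : ℝ} (hpq : ‖p‖ ≤ ‖q‖)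
    (hr : ∀ μ : ℝ, r ≤ ‖p - μ • q‖) (μ : ℝ) : r ≤ ‖q - μ • p‖ := by
  rcases le_or_gt r 0 with hr0 | hr0
  · exact hr0.trans (norm_nonneg _)
  have hp : 0 < ‖p‖ := hr0.trans_le (by simpa using hr 0)
  have hq : 0 < ‖q‖ := hp.trans_le hpq
  set ν := inner ℝ p q / ‖q‖ ^ 2
  have hν : ν * ‖q‖ ^ 2 = inner ℝ p q := div_mul_cancel₀ _ (by positivity)
  have h₁ := sq_norm_mul_sq_norm_sub_smul p q ν
  have h₂ := sq_norm_mul_sq_norm_sub_smul q p μ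
  rw [hν, sub_self, real_inner_comm] at h₁
  refine le_of_pow_le_pow_left₀ two_ne_zero (norm_nonneg _)
    (le_of_mul_le_mul_left ?_ (by positivity : 0 < ‖p‖ ^ 2))
  calc ‖p‖ ^ 2 * r ^ 2 ≤ ‖q‖ ^ 2 * ‖p - ν • q‖ ^ 2 := by
        gcongr
        exact hr ν
    _ ≤ ‖p‖ ^ 2 * ‖q - μ • p‖ ^ 2 := by
        rw [h₁, h₂]
        linarith [sq_nonneg (μ * ‖p‖ ^ 2 - inner ℝ q p)]

end InnerProduct

lemma EuclideanSpace.norm_le_norm_of_forall_abs_le {ι : Type*} [Fintype ι]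
    {x y : EuclideanSpace ℝ ι} (h : ∀ i, |x i| ≤ |y i|) : ‖x‖ ≤ ‖y‖ := by
  simp only [EuclideanSpace.norm_eq, Real.norm_eq_abs]
  gcongr √(∑ i, ?_ ^ 2) with i
  exact h i

lemma collinear_affLine (n : ℕ) (x v : EuclideanSpace ℝ (Fin n)) :
    Collinear ℝ (affLine n x v) :=
  (collinear_iff_exists_forall_eq_smul_vadd _).2
    ⟨x, v, fun _ ⟨t, ht⟩ => ⟨t, ht.trans (add_comm _ _)⟩⟩

theorem three_points_cylinder_lower_bound_general (n : ℕ)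
    (p q : EuclideanSpace ℝ (Fin n))
    (hpq : ∀ j, 0 ≤ p j ∧ p j ≤ q j)
    (r : ℝ) (hr : r = Metric.infDist p (affLine n (0 : EuclideanSpace ℝ (Fin n)) q)) :
    ∀ x v : EuclideanSpace ℝ (Fin n), v ≠ 0 →
      r / 2 ≤
        max (max (Metric.infDist (0 : EuclideanSpace ℝ (Fin n)) (affLine n x v))
              (Metric.infDist q (affLine n x v)))
          (Metric.infDist p (affLine n x v)) := by
  intro x v _
  have hp : ‖p‖ ≤ ‖q‖ := EuclideanSpace.norm_le_norm_of_forall_abs_le fun j =>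
    abs_le_abs_of_nonneg (hpq j).1 (hpq j).2
  have hqp : ‖q - p‖ ≤ ‖q‖ := EuclideanSpace.norm_le_norm_of_forall_abs_le fun j =>
    abs_le_abs_of_nonneg (sub_nonneg.2 (hpq j).2) (sub_le_self _ (hpq j).1)
  have hpr : ∀ μ : ℝ, r ≤ ‖p - μ • q‖ := fun μ => by
    rw [hr, ← dist_eq_norm]
    exact infDist_le_dist_of_mem ⟨μ, (zero_add _).symm⟩
  refine half_le_max_infDist_of_collinear (collinear_affLine n x v) ⟨x, 0, by simp⟩ ?_ ?_ ?_
  all_goals simp only [segment_eq_image, forall_mem_image]; intro θ _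
  -- `p ↦ q - p` swaps the vertices `0` and `q` and keeps the line `ℝq`.
  · have hqpr : ∀ μ : ℝ, r ≤ ‖(q - p) - μ • q‖ := fun μ => by
      rw [show q - p - μ • q = -(p - (1 - μ) • q) by module, norm_neg]
      exact hpr (1 - μ)
    rw [dist_zero_left, show (1 - θ) • q + θ • p = q - θ • (q - p) by module]
    exact le_norm_sub_smul_of_norm_le hqp hqpr θ
  · simpa [dist_eq_norm] using le_norm_sub_smul_of_norm_le hp hpr θ
  · simpa [dist_eq_norm] using hpr θ

/-- (Key lower bound used in Proposition 1) Let `0 ≤ p ≤ q` coordinatewise with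
`q ≠ 0`, and let `r` be the distance from `p` to the line through the origin and
`q`. Then any enclosing cylinder of the three points `0`, `q`, `p` has radius at
least `r/2`: for every affine line `ℓ′`,
`max {d(0,ℓ′), d(q,ℓ′), d(p,ℓ′)} ≥ r/2`. -/
theorem three_points_cylinder_lower_bound (n : ℕ) (hn : 1 ≤ n)
    (p q : EuclideanSpace ℝ (Fin n))
    (hpq : ∀ j, 0 ≤ p j ∧ p j ≤ q j) (hq : q ≠ 0)
    (r : ℝ) (hr : r = Metric.infDist p (affLine n (0 : EuclideanSpace ℝ (Fin n)) q)) :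
    ∀ x v : EuclideanSpace ℝ (Fin n), v ≠ 0 →
      r / 2 ≤
        max (max (Metric.infDist (0 : EuclideanSpace ℝ (Fin n)) (affLine n x v))
              (Metric.infDist q (affLine n x v)))
          (Metric.infDist p (affLine n x v)) :=
  three_points_cylinder_lower_bound_general n p q hpq r hr
end
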